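/- arXiv:0710.5565 — 7 statements merged into one kernel-verified Lean document; each statement's English description precedes it below -/
import Mathlib

section
/- A direct product of rings R = ∏_{i∈I} R_i is right ℵ₀-injective if and only if R_i is right ℵ₀-injective for every i ∈ I. -/
/-!
A right-linear map `R → R` is left multiplication by its value at `1`, so right
ℵ₀-injectivity says that every right-linear map on a countably generated right ideal is a left
multiplication. In `∏ j, R j` the idempotents `Pi.single i 1` are central, so a right ideal `I`
has the projections `{a | Pi.single i a ∈ I}` as its components (countably generated when `I`
is), and a right-linear `f` on `I` satisfies `f x i = f (Pi.single i (x i)) i`. Thus maps on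
right ideals of the product are families of maps on right ideals of the factors, and a
multiplier of the family is the family of multipliers.
-/

/-- A ring `R` is *right ℵ₀-injective* if every homomorphism of right `R`-modules
from a countably generated right ideal of `R` (i.e. a countably generated
submodule of `R` viewed as a right module over itself, equivalently as a module
over `Rᵐᵒᵖ`) to `R` extends to a homomorphism of right `R`-modules `R → R`. -/
def IsRightAleph0Injective (R : Type*) [Ring R] : Prop :=
  ∀ I : Submodule Rᵐᵒᵖ R,
    (∃ S : Set R, S.Countable ∧ Submodule.span Rᵐᵒᵖ S = I) →
    ∀ f : I →ₗ[Rᵐᵒᵖ] R, ∃ g : R →ₗ[Rᵐᵒᵖ] R, ∀ x : I, g (x : R) = f x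

open MulOpposite

theorem isRightAleph0Injective_iff_exists_mul (R : Type*) [Ring R] :
    IsRightAleph0Injective R ↔ ∀ I : Submodule Rᵐᵒᵖ R,
      (∃ S : Set R, S.Countable ∧ Submodule.span Rᵐᵒᵖ S = I) →
      ∀ f : I →ₗ[Rᵐᵒᵖ] R, ∃ c : R, ∀ x : I, f x = c * x := by
  refine forall₂_congr fun I _ => forall_congr' fun f => ⟨?_, ?_⟩
  · rintro ⟨g, hg⟩
    refine ⟨g 1, fun x => ?_⟩
    calc f x = g (op (x : R) • 1) := by rw [← hg, op_smul_eq_mul, one_mul]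
      _ = g 1 * x := by rw [g.map_smul, op_smul_eq_mul]
  · rintro ⟨c, hc⟩
    exact ⟨LinearMap.mulLeft Rᵐᵒᵖ c, fun x => (hc x).symm⟩

section Pi

variable {ι : Type*} {R : ι → Type*} [∀ i, Ring (R i)]

theorem Submodule.eval_mem_span_image_eval {S : Set (∀ j, R j)} {x : ∀ j, R j}
    (hx : x ∈ span (∀ j, R j)ᵐᵒᵖ S) (i : ι) : x i ∈ span (R i)ᵐᵒᵖ ((· i) '' S) := by
  induction hx using span_induction with
  | mem s hs => exact subset_span ⟨s, hs, rfl⟩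
  | zero => exact zero_mem _
  | add x y _ _ hx hy => exact add_mem hx hy
  | smul r x _ hx =>
    rw [smul_eq_mul_unop, Pi.mul_apply, ← op_smul_eq_mul]
    exact smul_mem _ _ hx

variable [DecidableEq ι]

theorem Pi.mul_single_one (x : ∀ j, R j) (i : ι) : x * Pi.single i 1 = Pi.single i (x i) := by
  rw [← Pi.single_mul_right, mul_one]

theorem Pi.single_mul_unop_eq_op_smul (i : ι) (a : R i) (r : (R i)ᵐᵒᵖ) :
    Pi.single i (a * r.unop) = op (Pi.single i r.unop : ∀ j, R j) • Pi.single i a := by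
  rw [op_smul_eq_mul, Pi.single_mul]

namespace Submodule

def piComponent (I : Submodule (∀ j, R j)ᵐᵒᵖ (∀ j, R j)) (i : ι) :
    Submodule (R i)ᵐᵒᵖ (R i) where
  carrier := {a | Pi.single i a ∈ I}
  add_mem' {a b} ha hb := by
    rw [Set.mem_ofPred_eq, Pi.single_add]
    exact I.add_mem ha hb
  zero_mem' := by simp
  smul_mem' r a ha := by
    rw [Set.mem_ofPred_eq, smul_eq_mul_unop, Pi.single_mul_unop_eq_op_smul]
    exact I.smul_mem _ ha

variable {I : Submodule (∀ j, R j)ᵐᵒᵖ (∀ j, R j)}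

theorem mem_piComponent {i : ι} {a : R i} : a ∈ I.piComponent i ↔ Pi.single i a ∈ I :=
  Iff.rfl

theorem eval_mem_piComponent {x : ∀ j, R j} (hx : x ∈ I) (i : ι) : x i ∈ I.piComponent i := by
  rw [mem_piComponent, ← Pi.mul_single_one, ← op_smul_eq_mul]
  exact I.smul_mem _ hx

theorem piComponent_span (S : Set (∀ j, R j)) (i : ι) :
    (span (∀ j, R j)ᵐᵒᵖ S).piComponent i = span (R i)ᵐᵒᵖ ((· i) '' S) := by
  refine le_antisymm (fun a ha => ?_) (span_le.mpr ?_)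
  · simpa using eval_mem_span_image_eval (mem_piComponent.mp ha) i
  · rintro _ ⟨s, hs, rfl⟩
    exact eval_mem_piComponent (subset_span hs) i

end Submodule

namespace LinearMap

variable {I : Submodule (∀ j, R j)ᵐᵒᵖ (∀ j, R j)}

def piComponent (f : I →ₗ[(∀ j, R j)ᵐᵒᵖ] (∀ j, R j)) (i : ι) :
    I.piComponent i →ₗ[(R i)ᵐᵒᵖ] R i where
  toFun a := f ⟨Pi.single i a, a.2⟩ i
  map_add' a b := by
    simp only [Submodule.coe_add, Pi.single_add, ← Pi.add_apply, ← f.map_add]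
    rfl
  map_smul' r a := by
    have : (⟨Pi.single i (r • a : I.piComponent i).1, (r • a).2⟩ : I) =
        op (Pi.single i r.unop : ∀ j, R j) • ⟨Pi.single i a, a.2⟩ :=
      Subtype.ext (Pi.single_mul_unop_eq_op_smul i a r)
    rw [RingHom.id_apply, this, f.map_smul, op_smul_eq_mul, Pi.mul_apply, Pi.single_eq_same,
      smul_eq_mul_unop]

theorem piComponent_apply_eval (f : I →ₗ[(∀ j, R j)ᵐᵒᵖ] (∀ j, R j)) (x : I) (i : ι) :
    f.piComponent i ⟨x.1 i, Submodule.eval_mem_piComponent x.2 i⟩ = f x i := by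
  have : (⟨Pi.single i (x.1 i), Submodule.eval_mem_piComponent x.2 i⟩ : I) =
      op (Pi.single i 1 : ∀ j, R j) • x :=
    Subtype.ext (by rw [Submodule.coe_smul, op_smul_eq_mul, Pi.mul_single_one])
  change f ⟨_, _⟩ i = _
  rw [this, f.map_smul, op_smul_eq_mul, Pi.mul_apply, Pi.single_eq_same, mul_one]

def piSingle {i : ι} {J : Submodule (R i)ᵐᵒᵖ (R i)} (hIJ : ∀ x ∈ I, x i ∈ J)
    (f : J →ₗ[(R i)ᵐᵒᵖ] R i) : I →ₗ[(∀ j, R j)ᵐᵒᵖ] (∀ j, R j) where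
  toFun x := Pi.single i (f ⟨x.1 i, hIJ _ x.2⟩)
  map_add' x y := by
    rw [← Pi.single_add, ← f.map_add]
    rfl
  map_smul' r x := by
    have : (⟨(r • x).1 i, hIJ _ (r • x).2⟩ : J) = op (r.unop i) • ⟨x.1 i, hIJ _ x.2⟩ :=
      Subtype.ext (by simp [smul_eq_mul_unop])
    rw [RingHom.id_apply, this, f.map_smul, smul_eq_mul_unop, unop_op, Pi.single_mul_left,
      smul_eq_mul_unop]

end LinearMap

end Pi

open Submodule in
theorem IsRightAleph0Injective.of_pi {ι : Type*} {R : ι → Type*} [∀ i, Ring (R i)]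
    (h : IsRightAleph0Injective (∀ j, R j)) (i : ι) : IsRightAleph0Injective (R i) := by
  classical
  rw [isRightAleph0Injective_iff_exists_mul] at h ⊢
  rintro J ⟨S, hS, rfl⟩ f
  let I := span (∀ j, R j)ᵐᵒᵖ (Pi.single i '' S)
  have hI : I.piComponent i = span (R i)ᵐᵒᵖ S := by
    simp [I, piComponent_span, Set.image_image]
  have hIJ (x) (hx : x ∈ I) : x i ∈ span (R i)ᵐᵒᵖ S := hI.le (eval_mem_piComponent hx i)
  obtain ⟨c, hc⟩ := h I ⟨_, hS.image _, rfl⟩ (f.piSingle hIJ)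
  refine ⟨c i, fun a => ?_⟩
  have ha : Pi.single i a.1 ∈ I := mem_piComponent.mp (hI.ge a.2)
  simpa [LinearMap.piSingle] using congr_fun (hc ⟨_, ha⟩) i

open Submodule in
theorem IsRightAleph0Injective.pi {ι : Type*} {R : ι → Type*} [∀ i, Ring (R i)]
    (h : ∀ i, IsRightAleph0Injective (R i)) : IsRightAleph0Injective (∀ i, R i) := by
  classical
  simp only [isRightAleph0Injective_iff_exists_mul] at h ⊢
  rintro I ⟨S, hS, rfl⟩ f
  choose c hc using fun i =>
    h i _ ⟨_, hS.image (· i), (piComponent_span S i).symm⟩ (f.piComponent i)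
  exact ⟨c, fun x => funext fun i => by rw [← f.piComponent_apply_eval, hc]; rfl⟩

/-- A direct product of rings `R = ∏_{i ∈ I} R_i` is right ℵ₀-injective if and
only if each `R_i` is right ℵ₀-injective. -/
theorem isRightAleph0Injective_pi_iff {ι : Type*} (R : ι → Type*)
    [∀ i, Ring (R i)] :
    IsRightAleph0Injective (∀ i, R i) ↔ ∀ i, IsRightAleph0Injective (R i) :=
  ⟨IsRightAleph0Injective.of_pi, IsRightAleph0Injective.pi⟩
end

section
/- If R is a right ℵ₀-injective ring and I and K are countably generated right ideals of R, then l(I ∩ K) = l(I) + l(K), where l(X) denotes the left annihilator of X in R. -/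
open Pointwise

/-- The left annihilator `l(X) = {r ∈ R : r * x = 0 for all x ∈ X}` of a subset
`X ⊆ R`, as a left ideal of `R`. -/
def leftAnn (R : Type*) [Ring R] (X : Set R) : Submodule R R where
  carrier := {r : R | ∀ x ∈ X, r * x = 0}
  zero_mem' := fun x _ => zero_mul x
  add_mem' := fun {a b} ha hb x hx => by rw [add_mul, ha x hx, hb x hx, add_zero]
  smul_mem' := fun c r hr x hx => by
    simp only [Set.mem_setOf_eq, smul_eq_mul] at *
    rw [mul_assoc, hr x hx, mul_zero]

/-! If `a` kills `I ∩ K`, then `x ↦ a x` on `I` and `0` on `K` agree on `I ∩ K` and glue to a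
right-linear map on the countably generated right ideal `I + K`. By ℵ₀-injectivity it is left
multiplication by some `c`, so `c` kills `K` and `a - c` kills `I`, whence `a = (a - c) + c`. -/

section
variable {R : Type*} [Ring R]

theorem IsRightAleph0Injective.exists_mul_eq (hR : IsRightAleph0Injective R)
    (f : R →ₗ.[Rᵐᵒᵖ] R)
    (hf : ∃ S : Set R, S.Countable ∧ Submodule.span Rᵐᵒᵖ S = f.domain) :
    ∃ c : R, ∀ x : f.domain, c * x = f x := by
  obtain ⟨g, hg⟩ := hR f.domain hf f.toFun
  have hg_mul : ∀ x, g 1 * x = g x :=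
    LinearMap.congr_fun ((RingEquiv.moduleEndSelfOp R).apply_symm_apply g)
  exact ⟨g 1, fun x => (hg_mul x).trans (hg x)⟩

theorem leftAnn_anti {X Y : Set R} (h : X ⊆ Y) : leftAnn R Y ≤ leftAnn R X :=
  fun _ hr x hx => hr x (h hx)

theorem leftAnn_add_le_leftAnn_inter (X Y : Set R) :
    leftAnn R X + leftAnn R Y ≤ leftAnn R (X ∩ Y) :=
  sup_le (leftAnn_anti Set.inter_subset_left) (leftAnn_anti Set.inter_subset_right)

theorem IsRightAleph0Injective.leftAnn_inf_le_add (hR : IsRightAleph0Injective R)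
    {I K : Submodule Rᵐᵒᵖ R}
    (hIK : ∃ S : Set R, S.Countable ∧ Submodule.span Rᵐᵒᵖ S = I ⊔ K) :
    leftAnn R ((I ⊓ K : Submodule Rᵐᵒᵖ R) : Set R) ≤
      leftAnn R (I : Set R) + leftAnn R (K : Set R) := by
  intro a ha
  let f : R →ₗ.[Rᵐᵒᵖ] R := (DistribSMul.toLinearMap Rᵐᵒᵖ R a).toPMap I
  let z : R →ₗ.[Rᵐᵒᵖ] R := (0 : R →ₗ[Rᵐᵒᵖ] R).toPMap K
  have hfz : ∀ (x : f.domain) (y : z.domain), (x : R) = y → f x = z y := by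
    rintro ⟨x, hx⟩ ⟨y, hy⟩ (rfl : x = y)
    exact ha x ⟨hx, hy⟩
  obtain ⟨c, hc⟩ := hR.exists_mul_eq (f.sup z hfz) hIK
  have hcK : c ∈ leftAnn R (K : Set R) := fun k (hk : k ∈ z.domain) => calc
    c * k = f.sup z hfz ⟨k, Submodule.mem_sup_right hk⟩ := hc ⟨_, _⟩
    _ = f 0 + z ⟨k, hk⟩ := LinearPMap.sup_apply hfz _ _ _ (zero_add k)
    _ = 0 := by simp [z]
  have hcI : a - c ∈ leftAnn R (I : Set R) := fun i (hi : i ∈ f.domain) => by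
    have hci : c * i = a * i := calc
      c * i = f.sup z hfz ⟨i, Submodule.mem_sup_left hi⟩ := hc ⟨_, _⟩
      _ = f ⟨i, hi⟩ + z 0 := LinearPMap.sup_apply hfz _ _ _ (add_zero i)
      _ = a * i := by simp [f]
    rw [sub_mul, hci, sub_self]
  exact sub_add_cancel a c ▸ Submodule.add_mem_sup hcI hcK

end

/-- If `R` is right ℵ₀-injective and `I`, `K` are countably generated right
ideals of `R`, then `l(I ∩ K) = l(I) + l(K)`. -/
theorem leftAnn_inf_eq_add (R : Type*) [Ring R]
    (hR : IsRightAleph0Injective R) (I K : Submodule Rᵐᵒᵖ R)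
    (hI : ∃ S : Set R, S.Countable ∧ Submodule.span Rᵐᵒᵖ S = I)
    (hK : ∃ S : Set R, S.Countable ∧ Submodule.span Rᵐᵒᵖ S = K) :
    leftAnn R ((I ⊓ K : Submodule Rᵐᵒᵖ R) : Set R) =
      leftAnn R (I : Set R) + leftAnn R (K : Set R) := by
  obtain ⟨S, hS, rfl⟩ := hI
  obtain ⟨T, hT, rfl⟩ := hK
  exact le_antisymm
    (hR.leftAnn_inf_le_add ⟨S ∪ T, hS.union hT, Submodule.span_union S T⟩)
    (leftAnn_add_le_leftAnn_inter _ _)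
end

section
/- If R is a right Kasch and right ℵ₀-injective ring, then every countably generated right ideal I of R is a right annihilator, i.e., I = r(l(I)). -/
universe u

/-- A ring `R` is *right Kasch* if every simple right `R`-module embeds into `R`
as a right `R`-module. -/
def IsRightKasch (R : Type u) [Ring R] : Prop :=
  ∀ (M : Type u) [AddCommGroup M] [Module Rᵐᵒᵖ M], IsSimpleModule Rᵐᵒᵖ M →
    ∃ f : M →ₗ[Rᵐᵒᵖ] R, Function.Injective f

/-- The right annihilator `r(X) = {s ∈ R : x * s = 0 for all x ∈ X}` of a subset
`X ⊆ R`, as a right ideal of `R`. -/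
def rightAnn (R : Type*) [Ring R] (X : Set R) : Submodule Rᵐᵒᵖ R where
  carrier := {s : R | ∀ x ∈ X, x * s = 0}
  zero_mem' := fun x _ => mul_zero x
  add_mem' := fun {a b} ha hb x hx => by rw [mul_add, ha x hx, hb x hx, add_zero]
  smul_mem' := fun c s hs x hx => by
    simp only [Set.mem_setOf_eq, MulOpposite.smul_eq_mul_unop] at *
    rw [← mul_assoc, hs x hx, zero_mul]

/-!
Take `b ∈ r(l(I))` outside `I` and put `I' = I + bR`. The module `I'/I` is cyclic, generated by the
image of `b`, and nonzero, so it has a simple quotient in which `b` survives; the Kasch property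
embeds that quotient in `R`, giving `f : I' → R` that kills `I` but not `b`. Since `I'` is
countably generated, ℵ₀-injectivity makes `f` left multiplication by some `a`. Then `a ∈ l(I)`,
so `f b = a * b = 0`, a contradiction.
-/

open Submodule

section SimpleQuotient

variable {A M : Type*} [Ring A] [AddCommGroup M] [Module A M]

theorem exists_isCoatom_notMem_of_span_singleton_eq_top {m : M} (hm : m ≠ 0)
    (hspan : span A {m} = ⊤) : ∃ K : Submodule A M, IsCoatom K ∧ m ∉ K := by
  have : Module.Finite A M := ⟨⟨{m}, by simpa using hspan⟩⟩
  have : Nontrivial M := ⟨⟨m, 0, hm⟩⟩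
  obtain ⟨K, hK, -⟩ := (eq_top_or_exists_le_coatom (⊥ : Submodule A M)).resolve_left bot_ne_top
  refine ⟨K, hK, fun hmK => hK.1 (top_le_iff.mp ?_)⟩
  rw [← hspan, span_singleton_le_iff_mem]
  exact hmK

theorem span_singleton_mkQ_eq_top (N : Submodule A M) (m : M) :
    span A {(comap (N ⊔ span A {m}).subtype N).mkQ ⟨m, mem_sup_right (mem_span_singleton_self m)⟩}
      = ⊤ := by
  rw [← Set.image_singleton, ← map_span, map_mkQ_eq_top]
  refine map_injective_of_injective (N ⊔ span A {m}).injective_subtype ?_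
  rw [Submodule.map_sup, map_comap_subtype, inf_eq_right.mpr le_sup_left, map_span,
    Set.image_singleton, map_subtype_top]
  rfl

end SimpleQuotient

theorem le_rightAnn_leftAnn (R : Type*) [Ring R] (I : Submodule Rᵐᵒᵖ R) :
    I ≤ rightAnn R (leftAnn R (I : Set R) : Set R) :=
  fun x hx _ ha => ha x hx

theorem LinearMap.eq_mul_map_one {R : Type*} [Ring R] (g : R →ₗ[Rᵐᵒᵖ] R) (x : R) :
    g x = g 1 * x := by
  simpa using g.map_smul (MulOpposite.op x) 1

theorem IsRightAleph0Injective.exists_eq_mul {R : Type*} [Ring R] (hR : IsRightAleph0Injective R)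
    {I : Submodule Rᵐᵒᵖ R} (hI : ∃ S : Set R, S.Countable ∧ span Rᵐᵒᵖ S = I)
    (f : I →ₗ[Rᵐᵒᵖ] R) : ∃ a : R, ∀ x : I, f x = a * x := by
  obtain ⟨g, hg⟩ := hR I hI f
  exact ⟨g 1, fun x => by rw [← hg, g.eq_mul_map_one]⟩

section Kasch

variable {R : Type u} [Ring R] {M : Type u} [AddCommGroup M] [Module Rᵐᵒᵖ M]

theorem IsRightKasch.exists_linearMap_ne_zero (hR : IsRightKasch R) {m : M} (hm : m ≠ 0)
    (hspan : span Rᵐᵒᵖ {m} = ⊤) : ∃ f : M →ₗ[Rᵐᵒᵖ] R, f m ≠ 0 := by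
  obtain ⟨K, hK, hmK⟩ := exists_isCoatom_notMem_of_span_singleton_eq_top hm hspan
  obtain ⟨ι, hι⟩ := hR (M ⧸ K) (isSimpleModule_iff_isCoatom.mpr hK)
  refine ⟨ι ∘ₗ K.mkQ, fun h => hmK ?_⟩
  rw [← Quotient.mk_eq_zero]
  exact hι (h.trans ι.map_zero.symm)

theorem IsRightKasch.exists_linearMap_sup_span_singleton (hR : IsRightKasch R)
    {N : Submodule Rᵐᵒᵖ M} {m : M} (hm : m ∉ N) :
    ∃ f : (N ⊔ span Rᵐᵒᵖ {m} : Submodule Rᵐᵒᵖ M) →ₗ[Rᵐᵒᵖ] R,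
      (∀ x : (N ⊔ span Rᵐᵒᵖ {m} : Submodule Rᵐᵒᵖ M), (x : M) ∈ N → f x = 0) ∧
        f ⟨m, mem_sup_right (mem_span_singleton_self m)⟩ ≠ 0 := by
  set N' := comap (N ⊔ span Rᵐᵒᵖ {m}).subtype N
  have hm_quot : N'.mkQ ⟨m, mem_sup_right (mem_span_singleton_self m)⟩ ≠ 0 := by
    rwa [mkQ_apply, ne_eq, Quotient.mk_eq_zero]
  obtain ⟨g, hg⟩ := hR.exists_linearMap_ne_zero hm_quot (span_singleton_mkQ_eq_top N m)
  refine ⟨g ∘ₗ N'.mkQ, fun x hx => ?_, hg⟩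
  rw [LinearMap.comp_apply, mkQ_apply, (Quotient.mk_eq_zero N').mpr hx, map_zero]

end Kasch

/-- If `R` is right Kasch and right ℵ₀-injective, then every countably generated
right ideal `I` of `R` is a right annihilator: `I = r(l(I))`. -/
theorem countably_generated_right_ideal_is_annihilator (R : Type u) [Ring R]
    (hKasch : IsRightKasch R) (hR : IsRightAleph0Injective R)
    (I : Submodule Rᵐᵒᵖ R)
    (hI : ∃ S : Set R, S.Countable ∧ Submodule.span Rᵐᵒᵖ S = I) :
    I = rightAnn R ((leftAnn R (I : Set R) : Submodule R R) : Set R) := by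
  refine (le_rightAnn_leftAnn R I).antisymm fun b hb => ?_
  by_contra hbI
  obtain ⟨f, hfI, hfb⟩ := hKasch.exists_linearMap_sup_span_singleton hbI
  obtain ⟨S, hS, rfl⟩ := hI
  obtain ⟨a, ha⟩ := hR.exists_eq_mul (I := span Rᵐᵒᵖ S ⊔ span Rᵐᵒᵖ {b})
    ⟨S ∪ {b}, hS.union (Set.countable_singleton b), span_union S {b}⟩ f
  have haI : a ∈ leftAnn R (span Rᵐᵒᵖ S : Set R) := fun x hx => by
    rw [← hfI ⟨x, mem_sup_left hx⟩ hx, ha]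
  exact hfb ((ha _).trans (hb a haI))
end

section
/- Let R be a right ℵ₀-injective ring. For any idempotent e ∈ R with ReR = R (i.e., the two-sided ideal generated by e is all of R), the corner ring eRe is also right ℵ₀-injective. -/
/-- The corner `eRe` of a ring `R` at an element `e`, realized as the subtype of
elements `x` with `e * x = x` and `x * e = x`.  For an idempotent `e` this set
is exactly `{e * r * e : r ∈ R}`. -/
def Corner (R : Type*) [Ring R] (e : R) : Type _ :=
  {x : R // e * x = x ∧ x * e = x}

namespace Corner

variable {R : Type*} [Ring R] {e : R}

instance : Zero (Corner R e) := ⟨⟨0, by rw [mul_zero], by rw [zero_mul]⟩⟩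

instance : Add (Corner R e) :=
  ⟨fun x y => ⟨x.1 + y.1, by rw [mul_add, x.2.1, y.2.1], by rw [add_mul, x.2.2, y.2.2]⟩⟩

instance : Neg (Corner R e) :=
  ⟨fun x => ⟨-x.1, by rw [mul_neg, x.2.1], by rw [neg_mul, x.2.2]⟩⟩

instance : Mul (Corner R e) :=
  ⟨fun x y => ⟨x.1 * y.1, by rw [← mul_assoc, x.2.1], by rw [mul_assoc, y.2.2]⟩⟩

instance : AddCommGroup (Corner R e) where
  add := (· + ·)
  add_assoc a b c := Subtype.ext (add_assoc a.1 b.1 c.1)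
  zero_add a := Subtype.ext (zero_add a.1)
  add_zero a := Subtype.ext (add_zero a.1)
  add_comm a b := Subtype.ext (add_comm a.1 b.1)
  neg_add_cancel a := Subtype.ext (neg_add_cancel a.1)
  nsmul := nsmulRec
  zsmul := zsmulRec

/-- The corner ring `eRe` of a ring `R` at an idempotent `e`, with the
multiplication inherited from `R` and identity element `e`. -/
def ring (he : IsIdempotentElem e) : Ring (Corner R e) :=
  letI : One (Corner R e) := ⟨⟨e, he, he⟩⟩
  { (inferInstance : AddCommGroup (Corner R e)) with
    mul := (· * ·)
    mul_assoc := fun a b c => Subtype.ext (mul_assoc a.1 b.1 c.1)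
    one := 1
    one_mul := fun a => Subtype.ext a.2.1
    mul_one := fun a => Subtype.ext a.2.2
    left_distrib := fun a b c => Subtype.ext (mul_add a.1 b.1 c.1)
    right_distrib := fun a b c => Subtype.ext (add_mul a.1 b.1 c.1)
    zero_mul := fun a => Subtype.ext (zero_mul a.1)
    mul_zero := fun a => Subtype.ext (mul_zero a.1) }

end Corner

open MulOpposite Finsupp

theorem TwoSidedIdeal.eq_zero_of_mul_mul_eq_zero {R : Type*} [Ring R] {s : Set R}
    (hs : TwoSidedIdeal.span s = ⊤) {z : R} (h : ∀ a, ∀ t ∈ s, z * a * t = 0) : z = 0 := by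
  have key : ∀ x ∈ TwoSidedIdeal.span s, ∀ a, z * a * x = 0 := by
    intro x hx
    induction hx using TwoSidedIdeal.span_induction with
    | mem t ht => exact fun a => h a t ht
    | zero => simp
    | add x y _ _ hx hy => intro a; rw [mul_add, hx, hy, add_zero]
    | neg x _ hx => intro a; rw [mul_neg, hx, neg_zero]
    | left_absorb b x _ hx => intro a; simpa only [mul_assoc] using hx (a * b)
    | right_absorb b x _ hx => intro a; rw [← mul_assoc, hx, zero_mul]
  simpa using key 1 (hs ▸ trivial) 1

theorem LinearMap.exists_range_lift_of_ker_le {R M N P : Type*} [Ring R] [AddCommGroup M]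
    [AddCommGroup N] [AddCommGroup P] [Module R M] [Module R N] [Module R P]
    (f : M →ₗ[R] N) (g : M →ₗ[R] P) (h : LinearMap.ker f ≤ LinearMap.ker g) :
    ∃ F : LinearMap.range f →ₗ[R] P, ∀ m, F ⟨f m, LinearMap.mem_range_self f m⟩ = g m :=
  ⟨(LinearMap.ker f).liftQ g h ∘ₗ f.quotKerEquivRange.symm.toLinearMap, fun m => by
    rw [LinearMap.comp_apply, LinearEquiv.coe_coe,
      show (⟨f m, _⟩ : LinearMap.range f) = f.quotKerEquivRange ((LinearMap.ker f).mkQ m) from rfl,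
      LinearEquiv.symm_apply_apply, Submodule.mkQ_apply, Submodule.liftQ_apply]⟩

namespace Corner

variable {R : Type*} [Ring R] {e : R}

@[simp] lemma val_mul (x y : Corner R e) : (x * y).1 = x.1 * y.1 := rfl

variable [Fact (IsIdempotentElem e)]

-- `Corner.ring` takes the idempotence proof as an argument; `Fact` lets instance search supply it.
instance : Ring (Corner R e) := Corner.ring Fact.out

def subtype : Corner R e →ₙ+* R where
  toFun := Subtype.val
  map_mul' _ _ := rfl
  map_zero' := rfl
  map_add' _ _ := rfl

def proj (r : R) : Corner R e :=
  ⟨e * r * e, by rw [← mul_assoc, ← mul_assoc, Fact.out (p := IsIdempotentElem e)],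
    by rw [mul_assoc, Fact.out (p := IsIdempotentElem e)]⟩

@[simp] lemma val_proj (r : R) : (proj r : Corner R e).1 = e * r * e := rfl

lemma val_mul_proj (x : Corner R e) (r : R) : (x * proj r).1 = x.1 * r * e := by
  rw [val_mul, val_proj, ← mul_assoc, ← mul_assoc, x.2.2]

lemma proj_mul_of_mul_val_eq {c : R} {x y : Corner R e} (h : c * x.1 = y.1) : proj c * x = y :=
  Subtype.ext <| by rw [val_mul, val_proj, mul_assoc, x.2.1, mul_assoc, h, y.2.1]

variable {ι : Type*}

lemma val_map_sum_smul_proj {M : Type*} [AddCommMonoid M] [Module (Corner R e)ᵐᵒᵖ M]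
    (φ : M →ₗ[(Corner R e)ᵐᵒᵖ] Corner R e) (x : ι → M) (l : ι →₀ Rᵐᵒᵖ) (a : R) :
    (φ (l.sum fun i r => op (proj (r.unop * a) : Corner R e) • x i)).1 =
      linearCombination Rᵐᵒᵖ (fun i => (φ (x i)).1) l * (a * e) := by
  rw [map_finsuppSum, linearCombination_apply, Finsupp.sum_mul]
  change subtype (l.sum _) = _
  rw [map_finsuppSum]
  refine Finsupp.sum_congr fun i _ => ?_
  rw [map_smul, op_smul_eq_mul, smul_eq_mul_unop]
  exact (val_mul_proj _ _).trans (by simp only [mul_assoc])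

theorem ker_linearCombination_le (hfull : TwoSidedIdeal.span {e} = ⊤)
    {I : Submodule (Corner R e)ᵐᵒᵖ (Corner R e)} (f : I →ₗ[(Corner R e)ᵐᵒᵖ] Corner R e)
    (x : ι → I) :
    LinearMap.ker (linearCombination Rᵐᵒᵖ fun i => (x i : Corner R e).1) ≤
      LinearMap.ker (linearCombination Rᵐᵒᵖ fun i => (f (x i)).1) := by
  intro l hl
  rw [LinearMap.mem_ker] at hl ⊢
  refine TwoSidedIdeal.eq_zero_of_mul_mul_eq_zero hfull ?_
  intro a _ ht
  rw [Set.mem_singleton_iff.mp ht]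
  set u : I := l.sum fun i r => op (proj (r.unop * a) : Corner R e) • x i
  have hu : u = 0 := by
    refine Subtype.ext (Subtype.ext ?_)
    rw [← Submodule.subtype_apply, val_map_sum_smul_proj I.subtype x l a]
    exact (congrArg (· * (a * e)) hl).trans (zero_mul _)
  rw [mul_assoc, ← val_map_sum_smul_proj f x l a]
  change (f u).1 = 0
  rw [hu, map_zero]
  rfl

end Corner

/-- Let `R` be a right ℵ₀-injective ring. For any idempotent `e ∈ R` with
`ReR = R` (the two-sided ideal generated by `e` is all of `R`), the corner
ring `eRe` is also right ℵ₀-injective. -/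
theorem corner_isRightAleph0Injective {R : Type*} [Ring R]
    (hR : IsRightAleph0Injective R) (e : R) (he : IsIdempotentElem e)
    (hfull : TwoSidedIdeal.span {e} = (⊤ : TwoSidedIdeal R)) :
    @IsRightAleph0Injective (Corner R e) (Corner.ring he) := by
  have : Fact (IsIdempotentElem e) := ⟨he⟩
  rintro _ ⟨T, hT, rfl⟩ f
  have : Countable T := hT.to_subtype
  let x : T → Submodule.span (Corner R e)ᵐᵒᵖ T := fun t => ⟨t, Submodule.subset_span t.2⟩
  obtain ⟨F, hF⟩ := LinearMap.exists_range_lift_of_ker_le _ _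
    (Corner.ker_linearCombination_le hfull f x)
  obtain ⟨g, hg⟩ := hR _ ⟨_, Set.countable_range _, (range_linearCombination _).symm⟩ F
  have hg_mul : ∀ r, g r = g 1 * r := fun r => by simpa using g.map_smul (op r) 1
  have hgx : ∀ t : T, g 1 * (t : Corner R e).1 = (f (x t)).1 := fun t => by
    have := (hg ⟨_, LinearMap.mem_range_self _ (single t 1)⟩).trans (hF _)
    simp only [linearCombination_single, one_smul] at this
    exact (hg_mul _).symm.trans this
  let d := DistribSMul.toLinearMap (Corner R e)ᵐᵒᵖ (Corner R e) (Corner.proj (e := e) (g 1))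
  have hdf : d ∘ₗ (Submodule.span _ T).subtype = f :=
    LinearMap.ext_on Submodule.span_span_coe_preimage fun y hy =>
      Corner.proj_mul_of_mul_val_eq (hgx ⟨y, hy⟩)
  exact ⟨d, LinearMap.congr_fun hdf⟩
end

section
/- Let R be a ring and n ≥ 1 an integer. If the matrix ring Mₙ(R) is right ℵ₀-injective, then for every countably generated right R-submodule T of the right R-module Rⁿ (column vectors), every R-linear map T → R extends to an R-linear map Rⁿ → R. -/
open MulOpposite Submodule

namespace Matrix

variable {R : Type*} [Ring R] {ι : Type*} [Fintype ι]

lemma transpose_mul_apply_eq_sum (A B : Matrix ι ι R) (j : ι) :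
    (A * B)ᵀ j = ∑ k, op (B k j) • Aᵀ k := by
  ext i
  simp [mul_apply]

variable [DecidableEq ι]

lemma op_smul_mem {I : Submodule (Matrix ι ι R)ᵐᵒᵖ (Matrix ι ι R)}
    {A : Matrix ι ι R} (hA : A ∈ I) (r : R) : op r • A ∈ I :=
  op_smul_eq_mul_diagonal A r ▸ I.smul_mem (op (diagonal fun _ => r)) hA

def singleColLinearMap (z : ι) : (ι → R) →ₗ[Rᵐᵒᵖ] Matrix ι ι R where
  toFun := updateCol 0 z
  map_add' v w := by
    ext i j
    by_cases hj : j = z <;> simp [hj]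
  map_smul' r v := by
    ext i j
    by_cases hj : j = z <;> simp [hj]

lemma singleColLinearMap_mem_span {S : Set (ι → R)} {v : ι → R}
    (hv : v ∈ span Rᵐᵒᵖ S) (z : ι) :
    singleColLinearMap z v ∈ span (Matrix ι ι R)ᵐᵒᵖ (singleColLinearMap z '' S) := by
  induction hv using span_induction with
  | mem w hw => exact subset_span ⟨w, hw, rfl⟩
  | zero => simp
  | add v w _ _ hv hw => simpa using add_mem hv hw
  | smul r v _ hv => simpa using op_smul_mem hv (unop r)

def colSubmodule (T : Submodule Rᵐᵒᵖ (ι → R)) :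
    Submodule (Matrix ι ι R)ᵐᵒᵖ (Matrix ι ι R) where
  carrier := {A | ∀ j, Aᵀ j ∈ T}
  add_mem' hA hB j := T.add_mem (hA j) (hB j)
  zero_mem' _ := T.zero_mem
  smul_mem' B A hA j := by
    rw [smul_eq_mul_unop, transpose_mul_apply_eq_sum]
    exact T.sum_mem fun k _ => T.smul_mem _ (hA k)

variable {T : Submodule Rᵐᵒᵖ (ι → R)}

lemma singleColLinearMap_mem_colSubmodule {v : ι → R} (hv : v ∈ T) (z : ι) :
    singleColLinearMap z v ∈ colSubmodule T := by
  intro j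
  change (updateCol 0 z v)ᵀ j ∈ T
  rw [← updateRow_transpose]
  rcases eq_or_ne j z with rfl | hj
  · rwa [updateRow_self]
  · rw [updateRow_ne hj]
    exact T.zero_mem

def mapColumns (f : T →ₗ[Rᵐᵒᵖ] R) :
    colSubmodule T →ₗ[(Matrix ι ι R)ᵐᵒᵖ] Matrix ι ι R where
  toFun A := replicateRow ι fun j => f ⟨(A : Matrix ι ι R)ᵀ j, A.2 j⟩
  map_add' A B := by
    ext i j
    exact (congrArg f (Subtype.ext rfl)).trans
      (map_add f ⟨(A : Matrix ι ι R)ᵀ j, A.2 j⟩ ⟨(B : Matrix ι ι R)ᵀ j, B.2 j⟩)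
  map_smul' B A := by
    have hcol (j : ι) : (⟨(B • A : colSubmodule T).1ᵀ j, (B • A).2 j⟩ : T) =
        ∑ k, op (unop B k j) • ⟨(A : Matrix ι ι R)ᵀ k, A.2 k⟩ :=
      Subtype.ext (by simp [smul_eq_mul_unop, transpose_mul_apply_eq_sum])
    ext i j
    rw [replicateRow_apply, hcol, map_sum, smul_eq_mul_unop, mul_apply]
    simp only [map_smul, op_smul_eq_mul, replicateRow_apply, RingHom.id_apply]

lemma mapColumns_singleColLinearMap (f : T →ₗ[Rᵐᵒᵖ] R) (x : T) (z i : ι) :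
    mapColumns f ⟨singleColLinearMap z x, singleColLinearMap_mem_colSubmodule x.2 z⟩ i z =
      f x := by
  simp only [mapColumns, singleColLinearMap, LinearMap.coe_mk, AddHom.coe_mk, replicateRow_apply]
  congr
  ext k
  exact updateCol_self

def colEntryLinearMap (g : Matrix ι ι R →ₗ[(Matrix ι ι R)ᵐᵒᵖ] Matrix ι ι R) (z : ι) :
    (ι → R) →ₗ[Rᵐᵒᵖ] R where
  toFun v := g (singleColLinearMap z v) z z
  map_add' v w := by simp
  map_smul' r v := by simp

end Matrix

open Matrix in
theorem exists_extension_of_isRightAleph0Injective_matrix {R : Type*} [Ring R]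
    {ι : Type*} [Fintype ι] [DecidableEq ι] (z : ι)
    (h : IsRightAleph0Injective (Matrix ι ι R)) (T : Submodule Rᵐᵒᵖ (ι → R))
    (hT : ∃ S : Set (ι → R), S.Countable ∧ span Rᵐᵒᵖ S = T) (f : T →ₗ[Rᵐᵒᵖ] R) :
    ∃ g : (ι → R) →ₗ[Rᵐᵒᵖ] R, ∀ x : T, g x = f x := by
  obtain ⟨S, hS, rfl⟩ := hT
  let I := span (Matrix ι ι R)ᵐᵒᵖ (singleColLinearMap z '' S)
  have hI : I ≤ colSubmodule (span Rᵐᵒᵖ S) :=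
    span_le.mpr <| by
      rintro _ ⟨v, hv, rfl⟩
      exact singleColLinearMap_mem_colSubmodule (subset_span hv) z
  obtain ⟨g, hg⟩ := h I ⟨_, hS.image _, rfl⟩ ((mapColumns f).comp (inclusion hI))
  exact ⟨colEntryLinearMap g z, fun x =>
    (congr_fun₂ (hg ⟨_, singleColLinearMap_mem_span x.2 z⟩) z z).trans
      (mapColumns_singleColLinearMap f x z z)⟩

/-- If the matrix ring `Mₙ(R)` (`n ≥ 1`) is right ℵ₀-injective, then for every
countably generated right `R`-submodule `T` of `Rⁿ`, every right `R`-linear map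
`T → R` extends to a right `R`-linear map `Rⁿ → R`. -/
theorem extend_of_matrix_isRightAleph0Injective (R : Type*) [Ring R]
    (n : ℕ) (hn : 1 ≤ n)
    (h : IsRightAleph0Injective (Matrix (Fin n) (Fin n) R)) :
    ∀ T : Submodule Rᵐᵒᵖ (Fin n → R),
      (∃ S : Set (Fin n → R), S.Countable ∧ Submodule.span Rᵐᵒᵖ S = T) →
      ∀ f : T →ₗ[Rᵐᵒᵖ] R,
        ∃ g : (Fin n → R) →ₗ[Rᵐᵒᵖ] R, ∀ x : T, g (x : Fin n → R) = f x :=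
  exists_extension_of_isRightAleph0Injective_matrix ⟨0, hn⟩ h
end

section
/- Let R be a semiperfect ring. If every homomorphism of right R-modules from a countably generated small right ideal of R to R extends to a homomorphism from R to R, then R is right ℵ₀-injective. -/
/-- The Jacobson radical `J` of a ring `R`, as a two-sided ideal. -/
def jacobsonRadical (R : Type*) [Ring R] : TwoSidedIdeal R :=
  TwoSidedIdeal.jacobson (⊥ : TwoSidedIdeal R)

/-- A ring `R` is *semiperfect* if `R/J` is a semisimple ring and idempotents of
`R/J` lift to idempotents of `R`, where `J` is the Jacobson radical of `R`. -/
def IsSemiperfectRing (R : Type*) [Ring R] : Prop :=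
  IsSemisimpleRing (jacobsonRadical R).ringCon.Quotient ∧
    ∀ x : (jacobsonRadical R).ringCon.Quotient, IsIdempotentElem x →
      ∃ e : R, IsIdempotentElem e ∧ (e : (jacobsonRadical R).ringCon.Quotient) = x

/-- A right ideal `L` of `R` is *small* (superfluous) if `L + L' ≠ R` for every
proper right ideal `L'` of `R`. -/
def IsSmallRightIdeal {R : Type*} [Ring R] (L : Submodule Rᵐᵒᵖ R) : Prop :=
  ∀ L' : Submodule Rᵐᵒᵖ R, L' ≠ ⊤ → L ⊔ L' ≠ ⊤

/-!
Let `f : I → R` with `I` a countably generated right ideal, and `π : R → R/J`. As `R/J` is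
semisimple, the right ideal of `R/J` generated by `π I` is generated by an element `π a` with
`a ∈ I` acting as a left identity on it, so `(1 - a) I ⊆ J`. Right ideals inside `J` are small,
and `(1 - a) I` is countably generated along with `I`, so `f` restricted to `(1 - a) I` extends
to some `g₀`; then `x ↦ f a * x + g₀ ((1 - a) * x)` extends `f`.
-/

open MulOpposite

theorem Submodule.exists_mem_forall_mul_eq_self {Q : Type*} [Ring Q] [IsSemisimpleModule Qᵐᵒᵖ Q]
    (L : Submodule Qᵐᵒᵖ Q) : ∃ e ∈ L, ∀ x ∈ L, e * x = x := by
  obtain ⟨C, hLC⟩ := ComplementedLattice.exists_isCompl L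
  set p := L.projectionOnto C hLC
  refine ⟨p 1, (p 1).prop, fun x hx => ?_⟩
  calc (p 1 : Q) * x = (p (op x • 1) : Q) := by rw [map_smul]; rfl
    _ = x := by
      rw [op_smul_eq_mul, one_mul]
      exact congrArg Subtype.val (L.projectionOnto_apply_left hLC ⟨x, hx⟩)

theorem Submodule.exists_mem_eq_of_mem_span_image {R Q : Type*} [Ring R] [Ring Q] {π : R →+* Q}
    (hπ : Function.Surjective π) (I : Submodule Rᵐᵒᵖ R) {q : Q}
    (hq : q ∈ Submodule.span Qᵐᵒᵖ (π '' I)) : ∃ a ∈ I, π a = q := by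
  induction hq using Submodule.span_induction with
  | mem q hq => exact hq
  | zero => exact ⟨0, I.zero_mem, map_zero π⟩
  | add _ _ _ _ h₁ h₂ =>
    obtain ⟨a₁, ha₁, rfl⟩ := h₁
    obtain ⟨a₂, ha₂, rfl⟩ := h₂
    exact ⟨a₁ + a₂, I.add_mem ha₁ ha₂, map_add π a₁ a₂⟩
  | smul r _ _ h =>
    obtain ⟨a, ha, rfl⟩ := h
    obtain ⟨b, hb⟩ := hπ r.unop
    exact ⟨a * b, I.smul_mem (op b) ha, by rw [map_mul, hb]; rfl⟩

namespace TwoSidedIdeal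

variable {R : Type*} [Ring R] (J : TwoSidedIdeal R)

theorem ringCon_mk'_eq_iff {a b : R} : J.ringCon.mk' a = J.ringCon.mk' b ↔ a - b ∈ J := by
  rw [RingCon.coe_mk', RingCon.eq, rel_iff]

theorem exists_mem_forall_sub_mul_mem [IsSemisimpleRing J.ringCon.Quotient]
    (I : Submodule Rᵐᵒᵖ R) : ∃ a ∈ I, ∀ z ∈ I, z - a * z ∈ J := by
  set π := J.ringCon.mk'
  obtain ⟨e, he, hmul⟩ := (Submodule.span _ (π '' I)).exists_mem_forall_mul_eq_self
  obtain ⟨a, haI, rfl⟩ := I.exists_mem_eq_of_mem_span_image J.ringCon.mk'_surjective he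
  refine ⟨a, haI, fun z hz => ?_⟩
  rw [← ringCon_mk'_eq_iff, map_mul, hmul _ (Submodule.subset_span ⟨z, hz, rfl⟩)]

end TwoSidedIdeal

theorem isUnit_one_sub_of_mem_jacobsonRadical {R : Type*} [Ring R] {x : R}
    (hx : x ∈ jacobsonRadical R) : IsUnit (1 - x) := by
  have hleft : ∀ y ∈ jacobsonRadical R, ∃ z, z * (1 - y) = 1 := fun y hy => by
    obtain ⟨z, hz⟩ := TwoSidedIdeal.mem_jacobson_iff.1 hy (-1)
    rw [TwoSidedIdeal.mem_bot] at hz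
    exact ⟨z, by rw [← sub_eq_zero, ← hz]; noncomm_ring⟩
  obtain ⟨z, hz⟩ := hleft x hx
  -- `z = 1 - (-z * x)` is again of the form `1 - y` with `y ∈ J`, so it has a left inverse `w`,
  -- and `w = w * z * (1 - x) = 1 - x`
  obtain ⟨w, hw⟩ := hleft (-(z * x))
    ((jacobsonRadical R).neg_mem ((jacobsonRadical R).mul_mem_left z x hx))
  have hwz : w * z = 1 := by
    rwa [show 1 - -(z * x) = z by rw [sub_neg_eq_add, ← hz]; noncomm_ring] at hw
  have hw_eq : w = 1 - x :=
    calc w = w * (z * (1 - x)) := by rw [hz, mul_one]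
      _ = 1 - x := by rw [← mul_assoc, hwz, one_mul]
  exact isUnit_iff_exists_and_exists.2 ⟨⟨z, hw_eq ▸ hwz⟩, ⟨z, hz⟩⟩

theorem isSmallRightIdeal_of_forall_mem_jacobsonRadical {R : Type*} [Ring R]
    {L : Submodule Rᵐᵒᵖ R} (hL : ∀ x ∈ L, x ∈ jacobsonRadical R) : IsSmallRightIdeal L := by
  intro L' hL' htop
  obtain ⟨x, hx, y, hy, hxy⟩ := Submodule.mem_sup.1 (htop ▸ Submodule.mem_top : (1 : R) ∈ L ⊔ L')
  obtain ⟨u, hu⟩ : IsUnit y := by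
    simpa [← hxy] using isUnit_one_sub_of_mem_jacobsonRadical (hL x hx)
  refine hL' (eq_top_iff.2 fun r _ => ?_)
  simpa [← hu, ← mul_assoc] using L'.smul_mem (op (↑u⁻¹ * r)) hy

section RightIdeal

variable {R : Type*} [Ring R] {I : Submodule Rᵐᵒᵖ R} {a : R}

theorem Submodule.map_mulLeft_one_sub_le (ha : a ∈ I) :
    I.map (DistribSMul.toLinearMap Rᵐᵒᵖ R (1 - a)) ≤ I := by
  rintro _ ⟨z, hz, rfl⟩
  simpa [sub_mul] using I.sub_mem hz (I.smul_mem (op z) ha)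

theorem Submodule.exists_extension_of_map_mulLeft_one_sub (ha : a ∈ I)
    (f : I →ₗ[Rᵐᵒᵖ] R) (g₀ : R →ₗ[Rᵐᵒᵖ] R)
    (hg₀ : ∀ x : I.map (DistribSMul.toLinearMap Rᵐᵒᵖ R (1 - a)),
      g₀ x = f (Submodule.inclusion (map_mulLeft_one_sub_le ha) x)) :
    ∃ g : R →ₗ[Rᵐᵒᵖ] R, ∀ x : I, g x = f x := by
  refine ⟨DistribSMul.toLinearMap Rᵐᵒᵖ R (f ⟨a, ha⟩) +
    g₀ ∘ₗ DistribSMul.toLinearMap Rᵐᵒᵖ R (1 - a), fun ⟨z, hz⟩ => ?_⟩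
  have hsplit : (⟨z, hz⟩ : I) = op z • ⟨a, ha⟩ +
      Submodule.inclusion (map_mulLeft_one_sub_le ha) ⟨(1 - a) * z, z, hz, rfl⟩ := by
    ext; simp [sub_mul]
  conv_rhs => rw [hsplit, map_add, map_smul, ← hg₀]
  rfl

end RightIdeal

/-- Let `R` be a semiperfect ring. If every homomorphism of right `R`-modules
from a countably generated small right ideal of `R` to `R` extends to a
homomorphism `R → R`, then `R` is right ℵ₀-injective. -/
theorem isRightAleph0Injective_of_semiperfect (R : Type*) [Ring R]
    (hsp : IsSemiperfectRing R)
    (hsmall : ∀ I : Submodule Rᵐᵒᵖ R, IsSmallRightIdeal I →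
      (∃ S : Set R, S.Countable ∧ Submodule.span Rᵐᵒᵖ S = I) →
      ∀ f : I →ₗ[Rᵐᵒᵖ] R, ∃ g : R →ₗ[Rᵐᵒᵖ] R, ∀ x : I, g (x : R) = f x) :
    IsRightAleph0Injective R := by
  rintro I ⟨S, hS, rfl⟩ f
  have := hsp.1
  obtain ⟨a, ha, hJ⟩ := (jacobsonRadical R).exists_mem_forall_sub_mul_mem (Submodule.span Rᵐᵒᵖ S)
  set mulLeft := DistribSMul.toLinearMap Rᵐᵒᵖ R (1 - a)
  have hK_small : IsSmallRightIdeal ((Submodule.span Rᵐᵒᵖ S).map mulLeft) :=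
    isSmallRightIdeal_of_forall_mem_jacobsonRadical fun _ ⟨z, hz, hzx⟩ => by
      simpa [← hzx, mulLeft, sub_mul] using hJ z hz
  obtain ⟨g₀, hg₀⟩ := hsmall _ hK_small ⟨mulLeft '' S, hS.image _, (Submodule.map_span _ _).symm⟩
    (f ∘ₗ Submodule.inclusion (Submodule.map_mulLeft_one_sub_le ha))
  exact Submodule.exists_extension_of_map_mulLeft_one_sub ha f g₀ hg₀
end

section
/- If R is a left ℵ₀-injective ring satisfying the ascending chain condition on right annihilators, then R is left finite dimensional, i.e., R contains no infinite independent family of nonzero left ideals. -/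
/-- A ring `R` is *left ℵ₀-injective* if every homomorphism of left `R`-modules
from a countably generated left ideal of `R` to `R` extends to a homomorphism of
left `R`-modules `R → R`. -/
def IsLeftAleph0Injective (R : Type*) [Ring R] : Prop :=
  ∀ I : Submodule R R,
    (∃ S : Set R, S.Countable ∧ Submodule.span R S = I) →
    ∀ f : I →ₗ[R] R, ∃ g : R →ₗ[R] R, ∀ x : I, g (x : R) = f x

/-- `R` satisfies the ascending chain condition on right annihilators: every
ascending chain of right ideals of the form `r(X)` stabilizes. -/
def ACCRightAnnihilators (R : Type*) [Ring R] : Prop :=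
  ∀ X : ℕ → Set R, Monotone (fun i => rightAnn R (X i)) →
    ∃ n, ∀ m, n ≤ m → rightAnn R (X m) = rightAnn R (X n)

/-!
Let `x₀, x₁, …` be nonzero elements generating independent cyclic left ideals. ACC on right
annihilators makes the chain `r({xᵢ : i ≥ n})` stationary from some `n` on. The left ideals
`R xₙ` and `Σ_{i > n} R xᵢ` are independent, so the map on their (countably generated) sum that is
the identity on the first and zero on the second is right multiplication by some `c`, by
ℵ₀-injectivity. Then `c ∈ r({xᵢ : i > n}) = r({xᵢ : i ≥ n})`, so `xₙ = xₙ c = 0`.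
-/

open Submodule

section Module

variable {R M : Type*} [Ring R] [AddCommGroup M] [Module R M]

theorem exists_seq_iSupIndep_span_singleton {ι : Type*} [Infinite ι] {L : ι → Submodule R M}
    (hL : iSupIndep L) (hne : ∀ i, L i ≠ ⊥) :
    ∃ x : ℕ → M, (∀ n, x n ≠ 0) ∧ iSupIndep fun n => R ∙ x n := by
  let e := Infinite.natEmbedding ι
  choose x hxL hx0 using fun n => exists_mem_ne_zero_of_ne_bot (hne (e n))
  exact ⟨x, hx0, (hL.comp e.injective).mono fun n => (span_singleton_le_iff_mem _ _).mpr (hxL n)⟩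

theorem iSupIndep.disjoint_span_singleton_span_image {ι : Type*} {x : ι → M}
    (hx : iSupIndep fun i => R ∙ x i) {i : ι} {s : Set ι} (hi : i ∉ s) :
    Disjoint (R ∙ x i) (span R (x '' s)) := by
  rw [span_eq_iSup_of_singleton_spans (x '' s), iSup_image]
  exact hx.disjoint_biSup hi

end Module

section Ring

variable {R : Type*} [Ring R]

theorem ACCRightAnnihilators.exists_mul_eq_zero_of_forall_gt (hacc : ACCRightAnnihilators R)
    (x : ℕ → R) : ∃ n, ∀ c : R, (∀ i, n < i → x i * c = 0) → x n * c = 0 := by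
  have hmono : Monotone fun n => rightAnn R (x '' Set.Ici n) := fun a b hab _ hs y hy =>
    hs y (Set.image_mono (Set.Ici_subset_Ici.mpr hab) hy)
  obtain ⟨n, hn⟩ := hacc _ hmono
  refine ⟨n, fun c hc => ?_⟩
  have hc' : c ∈ rightAnn R (x '' Set.Ici (n + 1)) := by
    rintro _ ⟨i, hi, rfl⟩
    exact hc i hi
  rw [hn (n + 1) n.le_succ] at hc'
  exact hc' (x n) ⟨n, Set.self_mem_Ici, rfl⟩

namespace IsLeftAleph0Injective

theorem exists_mul_eq (hinj : IsLeftAleph0Injective R) {I : Submodule R R}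
    (hI : ∃ S : Set R, S.Countable ∧ span R S = I) (f : I →ₗ[R] R) :
    ∃ c : R, ∀ a : I, f a = a * c := by
  obtain ⟨g, hg⟩ := hinj I hI f
  refine ⟨g 1, fun a => ?_⟩
  rw [← hg, ← smul_eq_mul, ← map_smul, smul_eq_mul, mul_one]

theorem exists_mul_eq_self_and_mul_eq_zero (hinj : IsLeftAleph0Injective R)
    {I J : Submodule R R} (hIJ : Disjoint I J)
    (hcg : ∃ S : Set R, S.Countable ∧ span R S = I ⊔ J) :
    ∃ c : R, (∀ a ∈ I, a * c = a) ∧ ∀ b ∈ J, b * c = 0 := by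
  let idI : R →ₗ.[R] R := ⟨I, I.subtype⟩
  let zeroJ : R →ₗ.[R] R := ⟨J, 0⟩
  let f := idI.sup zeroJ (idI.sup_h_of_disjoint zeroJ hIJ)
  obtain ⟨c, hc⟩ := hinj.exists_mul_eq hcg f.toFun
  have hle {g : R →ₗ.[R] R} (hg : g ≤ f) (a : g.domain) : g a = (a : R) * c := by
    rw [hg.2 (y := ⟨a, hg.1 a.2⟩) rfl]
    exact hc _
  refine ⟨c, fun a ha => ?_, fun b hb => ?_⟩
  · exact (hle (idI.left_le_sup _ _) ⟨a, ha⟩).symm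
  · exact (hle (idI.right_le_sup _ _) ⟨b, hb⟩).symm

end IsLeftAleph0Injective

theorem not_iSupIndep_span_singleton (hinj : IsLeftAleph0Injective R)
    (hacc : ACCRightAnnihilators R) {x : ℕ → R} (hx0 : ∀ n, x n ≠ 0) :
    ¬iSupIndep fun n => R ∙ x n := by
  intro hx
  obtain ⟨n, hn⟩ := hacc.exists_mul_eq_zero_of_forall_gt x
  have hcg : ∃ S : Set R, S.Countable ∧ span R S = (R ∙ x n) ⊔ span R (x '' Set.Ioi n) :=
    ⟨insert (x n) (x '' Set.Ioi n), ((Set.to_countable _).image x).insert _, span_insert _ _⟩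
  obtain ⟨c, hcn, hci⟩ := hinj.exists_mul_eq_self_and_mul_eq_zero
    (hx.disjoint_span_singleton_span_image (lt_irrefl n)) hcg
  have hxn : x n * c = 0 := hn c fun i hi => hci _ (subset_span ⟨i, hi, rfl⟩)
  exact hx0 n (by rw [← hcn _ (mem_span_singleton_self _), hxn])

end Ring

/-- If `R` is a left ℵ₀-injective ring with ACC on right annihilators, then `R`
is left finite dimensional: there is no infinite independent family of nonzero
left ideals of `R` (a family `(L i)` being independent when
`L i ⊓ (⨆ j ≠ i, L j) = ⊥` for each `i`). -/
theorem left_finite_dimensional_of_leftAleph0Injective (R : Type*) [Ring R]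
    (hinj : IsLeftAleph0Injective R) (hacc : ACCRightAnnihilators R) :
    ∀ {ι : Type*} (L : ι → Submodule R R),
      iSupIndep L → (∀ i, L i ≠ ⊥) → Finite ι := by
  intro ι L hL hne
  by_contra hfin
  have : Infinite ι := not_finite_iff_infinite.mp hfin
  obtain ⟨x, hx0, hx⟩ := exists_seq_iSupIndep_span_singleton hL hne
  exact not_iSupIndep_span_singleton hinj hacc hx0 hx
end
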